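/- Soundness of naive divide-and-conquer recombination: let (P, N) be a specification with P = P₁ ∪ P₂ and N = N₁ ∪ N₂, and for i, j ∈ {1, 2} let φ_ij be an LTL formula separating (P_i, N_j). Then the formula (φ₁₁ ∧ φ₁₂) ∨ (φ₂₁ ∧ φ₂₂) separates (P, N). -/
import Mathlib


/-- LTL formulae over an alphabet `α`. -/
inductive LTL (α : Type) : Type where
  | atom : α → LTL α
  | neg : LTL α → LTL α
  | conj : LTL α → LTL α → LTL α
  | disj : LTL α → LTL α → LTL α
  | next : LTL α → LTL α
  | ev : LTL α → LTL α
  | alw : LTL α → LTL α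
  | untl : LTL α → LTL α → LTL α

/-- Finite-trace satisfaction `tr, i ⊨ φ`: false whenever `i ≥ |tr|`,
and for `i < |tr|` the standard clauses. A trace is a finite sequence
(list) of sets of characters. -/
def Sat {α : Type} (tr : List (Set α)) : LTL α → ℕ → Prop
  | .atom p, i => i < tr.length ∧ p ∈ tr.getD i ∅
  | .neg φ, i => i < tr.length ∧ ¬ Sat tr φ i
  | .conj φ ψ, i => Sat tr φ i ∧ Sat tr ψ i
  | .disj φ ψ, i => i < tr.length ∧ (Sat tr φ i ∨ Sat tr ψ i)
  | .next φ, i => Sat tr φ (i + 1)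
  | .ev φ, i => ∃ j, i ≤ j ∧ j < tr.length ∧ Sat tr φ j
  | .alw φ, i => i < tr.length ∧ ∀ j, i ≤ j → j < tr.length → Sat tr φ j
  | .untl φ ψ, i =>
      ∃ j, i ≤ j ∧ j < tr.length ∧ Sat tr ψ j ∧ ∀ k, i ≤ k → k < j → Sat tr φ k

/-- `φ` separates the specification `(P, N)`: all traces in `P` are accepted
and all traces in `N` are rejected. -/
def Separates {α : Type} (φ : LTL α) (P N : Set (List (Set α))) : Prop :=
  (∀ tr ∈ P, Sat tr φ 0) ∧ (∀ tr ∈ N, ¬ Sat tr φ 0)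

/-- Uniform cost of an LTL formula: every connective and atomic proposition
costs 1. -/
def cost {α : Type} : LTL α → ℕ
  | .atom _ => 1
  | .neg φ => 1 + cost φ
  | .next φ => 1 + cost φ
  | .ev φ => 1 + cost φ
  | .alw φ => 1 + cost φ
  | .conj φ ψ => 1 + cost φ + cost ψ
  | .disj φ ψ => 1 + cost φ + cost ψ
  | .untl φ ψ => 1 + cost φ + cost ψ

/-- The language of `φ`: the set of traces satisfying `φ` at position 0. -/
def Lang {α : Type} (φ : LTL α) : Set (List (Set α)) := {tr | Sat tr φ 0}

lemma Sat_lt {α : Type} (tr : List (Set α)) : ∀ (φ : LTL α) (i : ℕ), Sat tr φ i → i < tr.length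
  | .atom _, _, h => h.1
  | .neg _, _, h => h.1
  | .conj φ _, i, h => Sat_lt tr φ i h.1
  | .disj _ _, _, h => h.1
  | .next φ, i, h => Nat.lt_of_succ_lt (Sat_lt tr φ (i+1) h)
  | .ev _, _, ⟨_, hij, hj, _⟩ => lt_of_le_of_lt hij hj
  | .alw _, _, h => h.1
  | .untl _ _, _, ⟨_, hij, hj, _⟩ => lt_of_le_of_lt hij hj

/-- Soundness of naive divide-and-conquer recombination: if `φᵢⱼ` separates
`(Pᵢ, Nⱼ)` then `(φ₁₁ ∧ φ₁₂) ∨ (φ₂₁ ∧ φ₂₂)` separates `(P₁ ∪ P₂, N₁ ∪ N₂)`. -/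
theorem stmt_17 {α : Type} [Fintype α] [Nonempty α]
    (P N P₁ P₂ N₁ N₂ : Set (List (Set α)))
    (hPfin : P.Finite) (hNfin : N.Finite)
    (hdisj : P ∩ N = ∅)
    (hP : P = P₁ ∪ P₂) (hN : N = N₁ ∪ N₂)
    (φ₁₁ φ₁₂ φ₂₁ φ₂₂ : LTL α)
    (h11 : Separates φ₁₁ P₁ N₁) (h12 : Separates φ₁₂ P₁ N₂)
    (h21 : Separates φ₂₁ P₂ N₁) (h22 : Separates φ₂₂ P₂ N₂) :
    Separates (LTL.disj (LTL.conj φ₁₁ φ₁₂) (LTL.conj φ₂₁ φ₂₂)) P N := by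
  constructor
  · intro tr htr
    rw [hP] at htr
    rcases htr with h | h
    · have h1 := h11.1 tr h
      exact ⟨Sat_lt tr φ₁₁ 0 h1, Or.inl ⟨h1, h12.1 tr h⟩⟩
    · have h1 := h21.1 tr h
      exact ⟨Sat_lt tr φ₂₁ 0 h1, Or.inr ⟨h1, h22.1 tr h⟩⟩
  · intro tr htr hs
    rw [hN] at htr
    rcases hs.2 with ⟨ha, hb⟩ | ⟨ha, hb⟩ <;> rcases htr with h | h
    · exact h11.2 tr h ha
    · exact h12.2 tr h hb
    · exact h21.2 tr h ha
    · exact h22.2 tr h hb
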